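/- Let G be a group. For every x in the derived subgroup [G,G] and every a ∈ G, the element (x ⊗ a)(a ⊗ x) is the identity in the nonabelian tensor square G ⊗ G. -/

import Mathlib

/- Nonabelian tensor square framework (Brown–Loday). -/

namespace NATensor

variable (G : Type*) [Group G]

/-- The relator set for the nonabelian tensor square of `G`:
`g g' ⊗ h = (ᵍg' ⊗ ᵍh)(g ⊗ h)` and `g ⊗ h h' = (g ⊗ h)(ʰg ⊗ ʰh')`. -/
def rels : Set (FreeGroup (G × G)) :=
  {r | (∃ g g' h : G,
          r = FreeGroup.of (g * g', h) *
              (FreeGroup.of (g * g' * g⁻¹, g * h * g⁻¹) * FreeGroup.of (g, h))⁻¹) ∨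
       (∃ g h h' : G,
          r = FreeGroup.of (g, h * h') *
              (FreeGroup.of (g, h) * FreeGroup.of (h * g * h⁻¹, h * h' * h⁻¹))⁻¹)}

/-- The nonabelian tensor square `G ⊗ G`. -/
abbrev TS := PresentedGroup (rels G)

variable {G}

/-- The generator `g ⊗ h` of the nonabelian tensor square. -/
def tmul (g h : G) : TS G := PresentedGroup.of (g, h)

lemma mk_rel_eq_one {r : FreeGroup (G × G)} (hr : r ∈ rels G) :
    (PresentedGroup.mk (rels G) r : TS G) = 1 :=
  (QuotientGroup.eq_one_iff r).mpr (Subgroup.subset_normalClosure hr)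

lemma tmul_rel₁ (g g' h : G) :
    tmul (g * g') h = tmul (g * g' * g⁻¹) (g * h * g⁻¹) * tmul g h := by
  have h1 := mk_rel_eq_one (G := G) (Or.inl ⟨g, g', h, rfl⟩)
  simp only [map_mul, map_inv, mul_inv_eq_one] at h1
  exact h1

lemma tmul_rel₂ (g h h' : G) :
    tmul g (h * h') = tmul g h * tmul (h * g * h⁻¹) (h * h' * h⁻¹) := by
  have h1 := mk_rel_eq_one (G := G) (Or.inr ⟨g, h, h', rfl⟩)
  simp only [map_mul, map_inv, mul_inv_eq_one] at h1
  exact h1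

variable (G)

/-- The homomorphism `κ : G ⊗ G → G`, `g ⊗ h ↦ [g,h] = g h g⁻¹ h⁻¹` (its image is `[G,G]`). -/
def kappa : TS G →* G :=
  PresentedGroup.toGroup (f := fun x : G × G => x.1 * x.2 * x.1⁻¹ * x.2⁻¹) (by
    rintro r (⟨g, g', h, rfl⟩ | ⟨g, h, h', rfl⟩) <;>
      simp only [map_mul, map_inv, FreeGroup.lift_apply_of] <;> group)

variable {G}

@[simp] lemma kappa_tmul (g h : G) : kappa G (tmul g h) = g * h * g⁻¹ * h⁻¹ :=
  PresentedGroup.toGroup.of _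

variable (G)

/-- `J(G) = ker κ ≅ π₃(SK(G,1))`. -/
def J : Subgroup (TS G) := (kappa G).ker

/-- `∇(G)`: the (normal) subgroup of `G ⊗ G` generated by the elements `x ⊗ x`. -/
def nabla : Subgroup (TS G) :=
  Subgroup.normalClosure {t | ∃ x : G, t = tmul x x}

/-- `Δ(G)`: the (normal) subgroup of `G ⊗ G` generated by the `(x ⊗ y)(y ⊗ x)`. -/
def delta : Subgroup (TS G) :=
  Subgroup.normalClosure {t | ∃ x y : G, t = tmul x y * tmul y x}

instance : (nabla G).Normal := Subgroup.normalClosure_normal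

instance : (delta G).Normal := Subgroup.normalClosure_normal

/-- The exterior square `G ∧ G = (G ⊗ G)/∇(G)`. -/
abbrev ES := TS G ⧸ nabla G

/-- The symmetric square `G ⊗̃ G = (G ⊗ G)/Δ(G)`. -/
abbrev SS := TS G ⧸ delta G

variable {G}

/-- The element `g ∧ h` of the exterior square. -/
def emul (g h : G) : ES G := QuotientGroup.mk' (nabla G) (tmul g h)

/-- The image of `g ⊗ h` in the symmetric square. -/
def smul (g h : G) : SS G := QuotientGroup.mk' (delta G) (tmul g h)

variable {H : Type*} [Group H]

/-- The induced homomorphism `G ⊗ G → H ⊗ H` of a homomorphism `f : G → H`. -/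
def tmap (f : G →* H) : TS G →* TS H :=
  PresentedGroup.toGroup (f := fun x : G × G => tmul (f x.1) (f x.2)) (by
    rintro r (⟨g, g', h, rfl⟩ | ⟨g, h, h', rfl⟩) <;>
      simp only [map_mul, map_inv, FreeGroup.lift_apply_of, mul_inv_eq_one]
    · rw [tmul_rel₁]
    · rw [tmul_rel₂])

@[simp] lemma tmap_tmul (f : G →* H) (g h : G) :
    tmap f (tmul g h) = tmul (f g) (f h) :=
  PresentedGroup.toGroup.of _

lemma nabla_le_comap_nabla (f : G →* H) :
    nabla G ≤ MonoidHom.ker ((QuotientGroup.mk' (nabla H)).comp (tmap f)) := by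
  refine Subgroup.normalClosure_le_normal ?_
  rintro _ ⟨y, rfl⟩
  simp only [SetLike.mem_coe, MonoidHom.mem_ker, MonoidHom.comp_apply, tmap_tmul,
    QuotientGroup.mk'_apply, QuotientGroup.eq_one_iff]
  exact Subgroup.subset_normalClosure ⟨f y, rfl⟩

lemma delta_le_comap_delta (f : G →* H) :
    delta G ≤ MonoidHom.ker ((QuotientGroup.mk' (delta H)).comp (tmap f)) := by
  refine Subgroup.normalClosure_le_normal ?_
  rintro _ ⟨x, y, rfl⟩
  simp only [SetLike.mem_coe, MonoidHom.mem_ker, MonoidHom.comp_apply, map_mul, tmap_tmul,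
    QuotientGroup.mk'_apply, ← QuotientGroup.mk_mul, QuotientGroup.eq_one_iff]
  exact Subgroup.subset_normalClosure ⟨f x, f y, rfl⟩

/-- The induced homomorphism `G ∧ G → H ∧ H` of a homomorphism `f : G → H`. -/
def emap (f : G →* H) : ES G →* ES H :=
  QuotientGroup.lift (nabla G) ((QuotientGroup.mk' (nabla H)).comp (tmap f))
    (fun x hx => MonoidHom.mem_ker.mp (nabla_le_comap_nabla f hx))

@[simp] lemma emap_emul (f : G →* H) (g h : G) :
    emap f (emul g h) = emul (f g) (f h) := by
  simp [emap, emul, QuotientGroup.mk'_apply, QuotientGroup.lift_mk']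
  exact (QuotientGroup.lift_mk (g := tmul g h) ..).trans (congrArg (QuotientGroup.mk' (nabla H)) (tmap_tmul f g h))

/-- The induced homomorphism `G ⊗̃ G → H ⊗̃ H` of a homomorphism `f : G → H`. -/
def smap (f : G →* H) : SS G →* SS H :=
  QuotientGroup.lift (delta G) ((QuotientGroup.mk' (delta H)).comp (tmap f))
    (fun x hx => MonoidHom.mem_ker.mp (delta_le_comap_delta f hx))

variable (G)

lemma nabla_le_ker_kappa : nabla G ≤ (kappa G).ker := by
  refine Subgroup.normalClosure_le_normal ?_
  rintro _ ⟨x, rfl⟩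
  simp only [SetLike.mem_coe, MonoidHom.mem_ker, kappa_tmul]
  group

/-- The homomorphism `κ' : G ∧ G → G`, `g ∧ h ↦ [g,h]` (its image is `[G,G]`). -/
def kappa' : ES G →* G :=
  QuotientGroup.lift (nabla G) (kappa G)
    (fun x hx => MonoidHom.mem_ker.mp (nabla_le_ker_kappa G hx))

/-- The Schur multiplier `M(G) = ker κ' ≅ H₂(G)`. -/
def M : Subgroup (ES G) := (kappa' G).ker

/-- `J̃(G) = J(G)/Δ(G) ≅ π₂ˢ(K(G,1))`, realized as the image of `J(G)` in `G ⊗̃ G`. -/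
def Jt : Subgroup (SS G) := Subgroup.map (QuotientGroup.mk' (delta G)) (J G)

/-- `∇(G)/Δ(G)`, realized as the image of `∇(G)` in `G ⊗̃ G`. -/
def nablaBar : Subgroup (SS G) := Subgroup.map (QuotientGroup.mk' (delta G)) (nabla G)

end NATensor

/- `G` acts on `G ⊗ G` diagonally by conjugation, and `p t p⁻¹ = κ(p) • t`.
From the defining relations one gets `κ(p) ⊗ a = p (a • p)⁻¹` for every `p`, first on
generators, where `κ(g ⊗ h) = ⁅g, h⁆`, then by induction on words. The endomorphism
`g ⊗ h ↦ (h ⊗ g)⁻¹` commutes with the action and with `κ`, so it turns this identity into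
`a ⊗ κ(p) = (κ(p) ⊗ a)⁻¹`. Since `κ` maps onto `[G, G]`, the theorem follows. -/

namespace NATensor

open scoped commutatorElement

variable {G : Type*} [Group G]

lemma hom_ext {M : Type*} [Group M] {f₁ f₂ : TS G →* M}
    (h : ∀ g h : G, f₁ (tmul g h) = f₂ (tmul g h)) : f₁ = f₂ :=
  PresentedGroup.ext fun x => h x.1 x.2

instance : MulDistribMulAction G (TS G) where
  smul a := tmap (MulAut.conj a).toMonoidHom
  one_smul t := DFunLike.congr_fun
    (hom_ext (f₁ := tmap (MulAut.conj 1).toMonoidHom) (f₂ := MonoidHom.id _)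
      fun g h => by simp) t
  mul_smul a b t := DFunLike.congr_fun
    (hom_ext (f₁ := tmap (MulAut.conj (a * b)).toMonoidHom)
      (f₂ := (tmap (MulAut.conj a).toMonoidHom).comp (tmap (MulAut.conj b).toMonoidHom))
      fun g h => by simp [mul_assoc]) t
  smul_mul a := map_mul _
  smul_one a := map_one _

lemma smul_tmul (a g h : G) : a • tmul g h = tmul (a * g * a⁻¹) (a * h * a⁻¹) :=
  tmap_tmul _ g h

lemma tmul_mul_left (g g' h : G) : tmul (g * g') h = g • tmul g' h * tmul g h := by
  rw [smul_tmul]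
  exact tmul_rel₁ g g' h

lemma tmul_mul_right (g h h' : G) : tmul g (h * h') = tmul g h * h • tmul g h' := by
  rw [smul_tmul]
  exact tmul_rel₂ g h h'

lemma one_tmul (h : G) : tmul (1 : G) h = 1 := by
  simpa using tmul_mul_left (1 : G) 1 h

lemma tmul_inv_left (g h : G) : tmul g⁻¹ h = g⁻¹ • (tmul g h)⁻¹ := by
  have h₁ := tmul_mul_left g⁻¹ g h
  rw [inv_mul_cancel, one_tmul, eq_comm, ← eq_inv_mul_iff_mul_eq, mul_one] at h₁
  rw [h₁, smul_inv']

-- The two ways of expanding `(g x) ⊗ (h y)` by the defining relations agree.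
lemma smul_tmul_mul_tmul_comm (g h x y : G) :
    (g * h) • tmul x y * tmul g h = tmul g h * (h * g) • tmul x y := by
  have h₁ := tmul_mul_left g x (h * y)
  rw [tmul_mul_right, tmul_mul_right, smul_mul', tmul_mul_right, tmul_mul_left,
    tmul_mul_left, smul_mul', ← mul_smul, ← mul_smul] at h₁
  simp only [mul_assoc, mul_left_cancel_iff] at h₁
  simpa only [← mul_assoc, mul_right_cancel_iff] using h₁.symm

lemma tmul_conj_eq_smul (g h : G) (t : TS G) :
    tmul g h * t * (tmul g h)⁻¹ = ⁅g, h⁆ • t := by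
  have key : (MulAut.conj (tmul g h)).toMonoidHom.comp
      (MulDistribMulAction.toMonoidHom (TS G) (h * g)) =
        MulDistribMulAction.toMonoidHom (TS G) (g * h) :=
    hom_ext fun x y => by simp [← smul_tmul_mul_tmul_comm]
  have ht := DFunLike.congr_fun key ((h * g)⁻¹ • t)
  simp only [MonoidHom.comp_apply, MulEquiv.coe_toMonoidHom, MulAut.conj_apply,
    MulDistribMulAction.toMonoidHom_apply, smul_smul, mul_inv_cancel, one_smul] at ht
  rw [ht, commutatorElement_def]
  group

lemma conj_eq_kappa_smul (p t : TS G) : p * t * p⁻¹ = kappa G p • t := by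
  have key : (MulAut.conj : TS G →* MulAut (TS G)) =
      (MulDistribMulAction.toMulAut G (TS G)).comp (kappa G) :=
    hom_ext fun g h => MulEquiv.ext fun t => by
      simpa [commutatorElement_def] using tmul_conj_eq_smul g h t
  exact MulEquiv.ext_iff.mp (DFunLike.congr_fun key p) t

lemma tmul_commutatorElement (g h a : G) :
    tmul ⁅g, h⁆ a = tmul g h * (a • tmul g h)⁻¹ := by
  have hconj : tmul (h * g * h⁻¹) a = (tmul g h)⁻¹ * tmul g a * a • tmul g h := by
    have h₁ := tmul_mul_right g h (h⁻¹ * a * h)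
    rw [smul_tmul, show h * (h⁻¹ * a * h) = a * h by group, mul_inv_cancel_right,
      tmul_mul_right] at h₁
    rw [← mul_right_inj (tmul g h), ← h₁]
    group
  calc tmul ⁅g, h⁆ a = tmul (g * (h * g * h⁻¹)⁻¹) a := by rw [commutatorElement_def]; group
    _ = ⁅g, h⁆ • (tmul (h * g * h⁻¹) a)⁻¹ * tmul g a := by
      rw [tmul_mul_left, tmul_inv_left, smul_smul, commutatorElement_def]; group
    _ = tmul g h * (a • tmul g h)⁻¹ := by rw [← tmul_conj_eq_smul, hconj]; group

lemma tmul_kappa (p : TS G) (a : G) : tmul (kappa G p) a = p * (a • p)⁻¹ := by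
  have hp : p ∈ Subgroup.closure (Set.range (PresentedGroup.of : G × G → TS G)) := by simp
  induction hp using Subgroup.closure_induction with
  | mem _ hgen =>
    obtain ⟨⟨g, h⟩, rfl⟩ := hgen
    rw [show PresentedGroup.of (g, h) = tmul g h from rfl, kappa_tmul, ← commutatorElement_def]
    exact tmul_commutatorElement g h a
  | one => simp [one_tmul]
  | mul P Q _ _ hP hQ =>
    rw [map_mul, tmul_mul_left, ← conj_eq_kappa_smul, hP, hQ, smul_mul']
    group
  | inv P _ hP =>
    rw [map_inv, tmul_inv_left, ← map_inv, ← conj_eq_kappa_smul, hP, smul_inv']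
    group

def tswap : TS G →* TS G :=
  PresentedGroup.toGroup (f := fun x : G × G => (tmul x.2 x.1)⁻¹) (by
    rintro r (⟨g, g', h, rfl⟩ | ⟨g, h, h', rfl⟩) <;>
      simp only [map_mul, map_inv, FreeGroup.lift_apply_of, mul_inv_eq_one] <;>
      rw [← mul_inv_rev, inv_inj]
    · exact tmul_rel₂ h g g'
    · exact tmul_rel₁ h h' g)

@[simp] lemma tswap_tmul (g h : G) : tswap (tmul g h) = (tmul h g)⁻¹ :=
  PresentedGroup.toGroup.of _

lemma kappa_tswap (t : TS G) : kappa G (tswap t) = kappa G t :=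
  DFunLike.congr_fun (hom_ext (f₁ := (kappa G).comp tswap) (f₂ := kappa G)
    fun g h => by
      simp only [MonoidHom.comp_apply, tswap_tmul, map_inv, kappa_tmul]; group) t

lemma tswap_smul (a : G) (t : TS G) : tswap (a • t) = a • tswap t :=
  DFunLike.congr_fun (hom_ext
    (f₁ := tswap.comp (MulDistribMulAction.toMonoidHom (TS G) a))
    (f₂ := (MulDistribMulAction.toMonoidHom (TS G) a).comp tswap)
    fun g h => by simp [smul_tmul]) t

lemma tmul_kappa_right (p : TS G) (a : G) :
    tmul a (kappa G p) = (tmul (kappa G p) a)⁻¹ := by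
  calc tmul a (kappa G p) = (tswap (tmul (kappa G p) a))⁻¹ := by rw [tswap_tmul, inv_inv]
    _ = (tswap p * (a • tswap p)⁻¹)⁻¹ := by rw [tmul_kappa, map_mul, map_inv, tswap_smul]
    _ = (tmul (kappa G p) a)⁻¹ := by rw [← tmul_kappa, kappa_tswap]

lemma commutator_le_range_kappa : commutator G ≤ (kappa G).range := by
  rw [commutator_eq_closure, Subgroup.closure_le]
  rintro _ ⟨g, h, rfl⟩
  exact ⟨tmul g h, by rw [kappa_tmul, commutatorElement_def]⟩

end NATensor

open NATensor in
/-- For every `x` in the derived subgroup `[G,G]` and every `a ∈ G`, the element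
`(x ⊗ a)(a ⊗ x)` is the identity in the nonabelian tensor square `G ⊗ G`. -/
theorem tmul_mul_tmul_swap_eq_one_of_mem_commutator (G : Type*) [Group G]
    (x : G) (hx : x ∈ commutator G) (a : G) :
    tmul x a * tmul a x = 1 := by
  obtain ⟨p, rfl⟩ := commutator_le_range_kappa hx
  rw [tmul_kappa_right, mul_inv_cancel]
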